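/- arXiv:math/0101176 — 3 statements merged into one kernel-verified Lean document; each statement's English description precedes it below -/
import Mathlib

section
/- Let a, b be positive integers. For a nonnegative integer h, the number of triples (i,j,k) ∈ ℤ≥0³ with i + aj + bk = h equals ∑_{l=0}^{⌊h/(a+b)⌋} (⌊(h−l(a+b))/a⌋ + ⌊(h−l(a+b))/b⌋ + 1). -/
set_option maxHeartbeats 2000000 in
lemma fiber_card (a b : ℕ) (ha : 0 < a) (hb : 0 < b) (h l : ℕ) (hl : l * (a + b) ≤ h) :
    (((Finset.range (h + 1)) ×ˢ (Finset.range (h + 1)) ×ˢ (Finset.range (h + 1))).filter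
      (fun p => (p.1 + a * p.2.1 + b * p.2.2 = h) ∧ min p.2.1 p.2.2 = l)).card
    = (h - l * (a + b)) / a + (h - l * (a + b)) / b + 1 := by
  obtain ⟨m, hml⟩ : ∃ m, l * (a + b) + m = h := ⟨h - l * (a + b), by omega⟩
  have hmeq : h - l * (a + b) = m := by omega
  rw [hmeq]
  have hAle : ∀ n, n ≤ m / a ↔ a * n ≤ m := fun n => by
    rw [Nat.le_div_iff_mul_le ha, Nat.mul_comm]
  have hBle : ∀ n, n ≤ m / b ↔ b * n ≤ m := fun n => by
    rw [Nat.le_div_iff_mul_le hb, Nat.mul_comm]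
  set A := m / a with hAdef
  set B := m / b with hBdef
  have hmh : m ≤ h := by omega
  have hlh : l ≤ h := by nlinarith
  rw [show A + B + 1 = (Finset.range (A + B + 1)).card from (Finset.card_range _).symm]
  apply Finset.card_nbij'
    (i := fun p => if p.2.1 = l then p.2.2 - l else B + (p.2.1 - l))
    (j := fun n => if n ≤ B then (m - b * n, l, l + n) else (m - a * (n - B), l + (n - B), l))
  · rintro ⟨i, j, k⟩ hp
    simp only [Finset.mem_coe, Finset.mem_filter, Finset.mem_product, Finset.mem_range] at hp
    obtain ⟨⟨hi, hj, hk⟩, heq, hmin⟩ := hp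
    simp only [Finset.mem_coe, Finset.mem_range]
    by_cases hjl : j = l
    · subst hjl
      have hkl : j ≤ k := by omega
      obtain ⟨k', rfl⟩ := Nat.exists_eq_add_of_le hkl
      have hbk : b * k' ≤ m := by nlinarith [mul_add b j k']
      have hkB : k' ≤ B := (hBle k').2 hbk
      rw [if_pos rfl, Nat.add_sub_cancel_left]
      calc k' ≤ B := hkB
        _ < A + B + 1 := by
          have : 0 ≤ A := Nat.zero_le A
          omega
    · have hkl2 : k = l ∧ l ≤ j := by omega
      obtain ⟨rfl, hlj⟩ := hkl2
      obtain ⟨j', rfl⟩ := Nat.exists_eq_add_of_le hlj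
      have haj : a * j' ≤ m := by nlinarith [mul_add a k j']
      have hjA : j' ≤ A := (hAle j').2 haj
      rw [if_neg hjl, Nat.add_sub_cancel_left]
      calc B + j' ≤ B + A := Nat.add_le_add_left hjA B
        _ < A + B + 1 := by omega
  · intro n hn
    simp only [Finset.mem_coe, Finset.mem_range] at hn
    by_cases hnB : n ≤ B
    · have hbn : b * n ≤ m := (hBle n).1 hnB
      beta_reduce
      rw [if_pos hnB]
      simp only [Finset.mem_coe, Finset.mem_filter, Finset.mem_product, Finset.mem_range]
      have hbl : b * (l + n) = b * l + b * n := mul_add b l n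
      have hln : l + n ≤ h := by nlinarith
      obtain ⟨c, hc⟩ : ∃ c, c + b * n = m := ⟨m - b * n, Nat.sub_add_cancel hbn⟩
      have hceq : m - b * n = c := by omega
      rw [hceq]
      refine ⟨⟨by omega, by omega, by omega⟩, by linarith, by omega⟩
    · obtain ⟨d, rfl⟩ : ∃ d, n = B + (d + 1) := ⟨n - B - 1, by omega⟩
      have hsub : B + (d + 1) - B = d + 1 := by omega
      have hjA : d + 1 ≤ A := by omega
      have han : a * (d + 1) ≤ m := (hAle (d + 1)).1 hjA
      beta_reduce
      rw [if_neg hnB, hsub]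
      simp only [Finset.mem_coe, Finset.mem_filter, Finset.mem_product, Finset.mem_range]
      have hal : a * (l + (d + 1)) = a * l + a * (d + 1) := mul_add a l (d + 1)
      have hln : l + (d + 1) ≤ h := by nlinarith
      obtain ⟨c, hc⟩ : ∃ c, c + a * (d + 1) = m := ⟨m - a * (d + 1), Nat.sub_add_cancel han⟩
      have hceq : m - a * (d + 1) = c := by omega
      rw [hceq]
      refine ⟨⟨by omega, by omega, by omega⟩, by linarith, by omega⟩
  · rintro ⟨i, j, k⟩ hp
    simp only [Finset.mem_coe, Finset.mem_filter, Finset.mem_product, Finset.mem_range] at hp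
    obtain ⟨⟨hi, hj, hk⟩, heq, hmin⟩ := hp
    by_cases hjl : j = l
    · subst hjl
      have hkl : j ≤ k := by omega
      obtain ⟨k', rfl⟩ := Nat.exists_eq_add_of_le hkl
      have hbk : b * k' ≤ m := by nlinarith [mul_add b j k']
      have hkB : k' ≤ B := (hBle k').2 hbk
      beta_reduce
      rw [if_pos rfl, Nat.add_sub_cancel_left, if_pos hkB]
      have him : i + b * k' = m := by nlinarith [mul_add b j k']
      have : m - b * k' = i := by omega
      rw [this]
    · have hkl2 : k = l ∧ l ≤ j := by omega
      obtain ⟨rfl, hlj⟩ := hkl2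
      obtain ⟨j', rfl⟩ := Nat.exists_eq_add_of_le hlj
      have h1 : 1 ≤ j' := by omega
      have haj : a * j' ≤ m := by nlinarith [mul_add a k j']
      beta_reduce
      rw [if_neg hjl, Nat.add_sub_cancel_left, if_neg (by omega : ¬ (B + j' ≤ B)),
        Nat.add_sub_cancel_left]
      have him : i + a * j' = m := by nlinarith [mul_add a k j']
      have : m - a * j' = i := by omega
      rw [this]
  · intro n hn
    simp only [Finset.mem_coe, Finset.mem_range] at hn
    beta_reduce
    by_cases hnB : n ≤ B
    · rw [if_pos hnB, if_pos rfl, Nat.add_sub_cancel_left]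
    · rw [if_neg hnB, if_neg (by omega : ¬ (l + (n - B) = l)), Nat.add_sub_cancel_left]
      omega

/-- The number of lattice points (i,j,k) ∈ ℤ≥0³ with i + a·j + b·k = h equals
    ∑_{l=0}^{⌊h/(a+b)⌋} (⌊(h−l(a+b))/a⌋ + ⌊(h−l(a+b))/b⌋ + 1). -/
theorem stmt0 (a b : ℕ) (ha : 0 < a) (hb : 0 < b) (h : ℕ) :
    (((Finset.range (h + 1)) ×ˢ (Finset.range (h + 1)) ×ˢ (Finset.range (h + 1))).filter
      (fun p => p.1 + a * p.2.1 + b * p.2.2 = h)).card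
    = ∑ l ∈ Finset.range (h / (a + b) + 1),
        ((h - l * (a + b)) / a + (h - l * (a + b)) / b + 1) := by
  have hab : 0 < a + b := by omega
  rw [Finset.card_eq_sum_card_fiberwise (f := fun p => min p.2.1 p.2.2)
      (t := Finset.range (h / (a + b) + 1)) ?_]
  · apply Finset.sum_congr rfl
    intro l hl
    simp only [Finset.mem_range] at hl
    have hl' : l ≤ h / (a + b) := by omega
    have hlab : l * (a + b) ≤ h := (Nat.le_div_iff_mul_le hab).1 hl'
    rw [Finset.filter_filter]
    exact fiber_card a b ha hb h l hlab
  · rintro ⟨i, j, k⟩ hp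
    simp only [Finset.mem_coe, Finset.mem_filter, Finset.mem_product, Finset.mem_range] at hp
    obtain ⟨⟨hi, hj, hk⟩, heq⟩ := hp
    simp only [Finset.mem_coe, Finset.mem_range]
    have hmin : min j k * (a + b) ≤ h := by
      have h1 : a * min j k ≤ a * j := Nat.mul_le_mul_left a (Nat.min_le_left j k)
      have h2 : b * min j k ≤ b * k := Nat.mul_le_mul_left b (Nat.min_le_right j k)
      nlinarith
    have := (Nat.le_div_iff_mul_le hab).2 hmin
    omega
end

section
/- Let r be a positive integer, n ≥ 1, and a₁, ..., a_{n−1} integers with 0 ≤ a_j < r and gcd(r, a₁) = 1. Let l = min{ i : 0 < i ≤ r and a_j·i ≡ i (mod r) for all 1 ≤ j ≤ n−1 }. Define g(h) = |{(b₀, b₁, ..., b_{n−1}) ∈ ℤ≥0ⁿ : l·(b₀+b₁+⋯+b_{n−1})/r < h and b₀ + a₁b₁ + ⋯ + a_{n−1}b_{n−1} ≡ 0 (mod r)}|. Then g(h)·n!/hⁿ tends to r^{n−1}/lⁿ as h → ∞. -/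
/-!
Let `S(K)` be the set of `b ∈ ℕⁿ` with `∑ b ≤ K`; stars and bars gives `#S(K) = C(K + n, n)`,
which is `Kⁿ / n! + O(Kⁿ⁻¹)`. Since `b₀` has coefficient `1` in the linear form
`b₀ + a₁b₁ + ⋯ + aₙ₋₁bₙ₋₁`, translating `b₀` by `j` maps the points of `S(K)` in the residue
class `c` injectively to the points of `S(K + j)` in the class `c + j`. Hence, up to replacing `K`
by `K ± r`, all `r` residue classes have the same size, and the class `0` has about
`#S(K) / r` points. The condition `l · ∑ b < h r` says `∑ b ≤ K(h) := ⌊(h r - 1) / l⌋`, and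
`K(h) ≈ h r / l`, so `g(h) ≈ (h r / l)ⁿ / (r · n!)`.
-/

open Filter Finset Topology

lemma tendsto_div_natCast_of_abs_sub_mul_le {y : ℕ → ℝ} {α C : ℝ}
    (hy : ∀ᶠ h in atTop, |y h - α * h| ≤ C) :
    Tendsto (fun h : ℕ => y h / h) atTop (𝓝 α) := by
  rw [tendsto_iff_norm_sub_tendsto_zero]
  refine squeeze_zero' (.of_forall fun _ => norm_nonneg _) ?_
    (tendsto_const_div_atTop_nhds_zero_nat C)
  filter_upwards [hy, eventually_gt_atTop 0] with h hyh hh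
  have hh' : (0 : ℝ) < h := Nat.cast_pos.2 hh
  have hdiff : y h / h - α = (y h - α * h) / h := by field_simp
  rw [Real.norm_eq_abs, hdiff, abs_div, abs_of_pos hh']
  exact div_le_div_of_nonneg_right hyh hh'.le

lemma tendsto_choose_mul_factorial_div_pow {x : ℕ → ℕ} {α : ℝ}
    (hx : Tendsto (fun h : ℕ => (x h : ℝ) / h) atTop (𝓝 α)) (n : ℕ) :
    Tendsto (fun h : ℕ => ((x h + n).choose n * n.factorial : ℝ) / h ^ n) atTop (𝓝 (α ^ n)) := by
  have hfactor (i : ℕ) : Tendsto (fun h : ℕ => ((x h + 1 + i : ℕ) : ℝ) / h) atTop (𝓝 α) := by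
    refine (add_zero α ▸ hx.add (tendsto_const_div_atTop_nhds_zero_nat ((1 + i : ℕ) : ℝ))).congr
      fun h => ?_
    push_cast
    ring
  have hprod := tendsto_finsetProd (range n) fun i _ => hfactor i
  simp only [prod_const, card_range] at hprod
  refine hprod.congr fun h => ?_
  rw [prod_div_distrib, prod_const, card_range, ← Nat.cast_prod, ← Nat.ascFactorial_eq_prod_range,
    Nat.ascFactorial_eq_factorial_mul_choose]
  push_cast
  ring

lemma abs_pred_div_sub_div_le {N l : ℕ} (hl : 0 < l) :
    |(((N - 1) / l : ℕ) : ℝ) - N / l| ≤ 1 := by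
  have hl' : (0 : ℝ) < l := Nat.cast_pos.2 hl
  have hle : l * ((N - 1) / l) ≤ N := (Nat.mul_div_le _ _).trans (Nat.sub_le _ _)
  have hge : N ≤ l * ((N - 1) / l) + l := by
    have := Nat.lt_mul_div_succ (N - 1) hl
    rw [Nat.mul_succ] at this
    omega
  have hle' : (((N - 1) / l : ℕ) : ℝ) ≤ N / l := by
    rw [le_div_iff₀ hl', mul_comm]; exact_mod_cast hle
  have hge' : (N : ℝ) / l ≤ ((N - 1) / l : ℕ) + 1 := by
    rw [div_le_iff₀ hl', add_mul, one_mul, mul_comm]; exact_mod_cast hge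
  rw [abs_sub_le_iff]
  constructor <;> linarith

section Simplex

variable {ι : Type*} [Fintype ι] [DecidableEq ι]

variable (ι) in
def simplexPoints (K : ℕ) : Finset (ι → ℕ) :=
  {b ∈ Fintype.piFinset fun _ => range (K + 1) | ∑ i, b i ≤ K}

@[simp]
lemma mem_simplexPoints {K : ℕ} {b : ι → ℕ} : b ∈ simplexPoints ι K ↔ ∑ i, b i ≤ K := by
  simp only [simplexPoints, mem_filter, Fintype.mem_piFinset, mem_range, and_iff_right_iff_imp]
  exact fun hb i =>
    Nat.lt_succ_of_le ((single_le_sum (fun _ _ => Nat.zero_le _) (mem_univ i)).trans hb)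

lemma simplexPoints_mono {K K' : ℕ} (hK : K ≤ K') : simplexPoints ι K ⊆ simplexPoints ι K' :=
  fun _ hb => mem_simplexPoints.2 ((mem_simplexPoints.1 hb).trans hK)

def sumEqOptionEquivSumLe (K : ℕ) :
    {P : Option ι → ℕ // ∑ i, P i = K} ≃ {b : ι → ℕ // ∑ i, b i ≤ K} where
  toFun P := ⟨fun i => P.1 (some i), by
    have hP := P.2
    rw [Fintype.sum_option] at hP
    change ∑ i, P.1 (some i) ≤ K
    omega⟩
  invFun b := ⟨fun i => i.elim (K - ∑ i, b.1 i) b.1, by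
    rw [Fintype.sum_option]; exact Nat.sub_add_cancel b.2⟩
  left_inv P := by
    ext (_ | i)
    · simp only [Option.elim_none]
      have := P.2
      rw [Fintype.sum_option] at this
      omega
    · rfl
  right_inv b := rfl

lemma card_simplexPoints (K : ℕ) :
    #(simplexPoints ι K) = (K + Fintype.card ι).choose (Fintype.card ι) := by
  rw [← Nat.card_eq_finsetCard,
    Nat.card_congr ((Equiv.subtypeEquivRight fun _ => mem_simplexPoints).trans
      ((sumEqOptionEquivSumLe K).symm.trans (Sym.equivNatSumOfFintype (Option ι) K).symm)),
    Nat.card_eq_fintype_card, Sym.card_sym_eq_choose,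
    Fintype.card_option, Nat.add_right_comm, Nat.add_sub_cancel, Nat.add_comm, Nat.choose_symm_add]

section Levels

variable {r : ℕ} (w : ι → ZMod r)

def simplexLevel (K : ℕ) (c : ZMod r) : Finset (ι → ℕ) :=
  {b ∈ simplexPoints ι K | ∑ i, w i * b i = c}

variable {w}

lemma card_simplexLevel_le_shift {i : ι} (hi : w i = 1) (K j : ℕ) (c : ZMod r) :
    #(simplexLevel w K c) ≤ #(simplexLevel w (K + j) (c + j)) := by
  refine card_le_card_of_injOn (· + Pi.single i j) (fun b hb => ?_)
    (add_left_injective _).injOn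
  simp only [simplexLevel, coe_filter, mem_simplexPoints, Set.mem_ofPred_eq] at hb ⊢
  simp only [Pi.add_apply, sum_add_distrib, Finset.sum_pi_single', mem_univ, if_true,
    Nat.cast_add, mul_add, hb.2]
  refine ⟨by omega, ?_⟩
  simp [Pi.single_apply, hi]

lemma card_simplexLevel_le [NeZero r] {i : ι} (hi : w i = 1) {K K' : ℕ} (hK : K + r ≤ K')
    (c c' : ZMod r) :
    #(simplexLevel w K c) ≤ #(simplexLevel w K' c') := by
  have hj : c + (c' - c).val = c' := by rw [ZMod.natCast_zmod_val, add_sub_cancel]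
  calc #(simplexLevel w K c) ≤ #(simplexLevel w (K + (c' - c).val) (c + (c' - c).val)) :=
        card_simplexLevel_le_shift hi K _ c
    _ = #(simplexLevel w (K + (c' - c).val) c') := by rw [hj]
    _ ≤ #(simplexLevel w K' c') :=
        card_le_card (filter_subset_filter _ (simplexPoints_mono (by
          have := ZMod.val_lt (c' - c); omega)))

lemma card_simplexPoints_eq_sum [NeZero r] (K : ℕ) :
    #(simplexPoints ι K) = ∑ c : ZMod r, #(simplexLevel w K c) :=
  card_eq_sum_card_fiberwise fun _ _ => mem_univ _

lemma choose_le_mul_card_simplexLevel [NeZero r] {i : ι} (hi : w i = 1) {K : ℕ} (hK : r ≤ K)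
    (c : ZMod r) :
    (K - r + Fintype.card ι).choose (Fintype.card ι) ≤ r * #(simplexLevel w K c) := by
  rw [← card_simplexPoints, card_simplexPoints_eq_sum (w := w)]
  simpa using sum_le_card_nsmul univ _ _ fun c' _ =>
    card_simplexLevel_le hi (Nat.sub_add_cancel hK).le c' c

lemma mul_card_simplexLevel_le_choose [NeZero r] {i : ι} (hi : w i = 1) (K : ℕ) (c : ZMod r) :
    r * #(simplexLevel w K c) ≤ (K + r + Fintype.card ι).choose (Fintype.card ι) := by
  rw [← card_simplexPoints, card_simplexPoints_eq_sum (w := w)]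
  simpa using card_nsmul_le_sum univ _ _ fun c' _ => card_simplexLevel_le hi le_rfl c c'

lemma tendsto_card_simplexLevel_mul_factorial_div_pow [NeZero r] {i : ι} (hi : w i = 1)
    {K : ℕ → ℕ} {α C : ℝ} (hK : ∀ h, |(K h : ℝ) - α * h| ≤ C) (hKr : ∀ᶠ h in atTop, r ≤ K h)
    (c : ZMod r) :
    Tendsto (fun h : ℕ =>
        (#(simplexLevel w (K h) c) * (Fintype.card ι).factorial : ℝ) / h ^ Fintype.card ι)
      atTop (𝓝 (α ^ Fintype.card ι / r)) := by
  set n := Fintype.card ι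
  have hr : (0 : ℝ) < r := Nat.cast_pos.2 (Nat.pos_of_neZero r)
  have hupper := tendsto_choose_mul_factorial_div_pow (x := fun h => K h + r)
    (tendsto_div_natCast_of_abs_sub_mul_le (C := C + r) (.of_forall fun h => by
      push_cast
      rw [add_sub_right_comm]
      exact (abs_add_le _ _).trans (by rw [Nat.abs_cast]; linarith [hK h]))) n
  have hlower := tendsto_choose_mul_factorial_div_pow (x := fun h => K h - r)
    (tendsto_div_natCast_of_abs_sub_mul_le (C := C + r) (hKr.mono fun h hh => by
      push_cast [hh]
      rw [sub_sub, add_comm (r : ℝ), ← sub_sub]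
      exact (abs_sub _ _).trans (by rw [Nat.abs_cast]; linarith [hK h]))) n
  have hscaled : Tendsto (fun h : ℕ =>
      r * ((#(simplexLevel w (K h) c) * n.factorial : ℝ) / h ^ n)) atTop (𝓝 (α ^ n)) := by
    refine tendsto_of_tendsto_of_tendsto_of_le_of_le' hlower hupper ?_ (.of_forall fun h => ?_)
    · filter_upwards [hKr] with h hh
      rw [← mul_div_assoc, ← mul_assoc]
      gcongr
      exact_mod_cast choose_le_mul_card_simplexLevel hi hh c
    · rw [← mul_div_assoc, ← mul_assoc]
      gcongr
      exact_mod_cast mul_card_simplexLevel_le_choose hi (K h) c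
  rw [div_eq_inv_mul]
  exact (hscaled.const_mul (r : ℝ)⁻¹).congr fun h => inv_mul_cancel_left₀ hr.ne' _

end Levels

end Simplex

lemma natCard_eq_card_simplexLevel {m r l N : ℕ} [NeZero r] (hl : 0 < l) (hN : 0 < N)
    (a : Fin m → ℕ) :
    Nat.card {b : Fin (m + 1) → ℕ //
        l * (∑ i, b i) < N ∧ (b 0 + ∑ j : Fin m, a j * b j.succ) % r = 0}
      = #(simplexLevel (Fin.cons 1 fun j => (a j : ZMod r)) ((N - 1) / l) 0) := by
  rw [← Nat.card_eq_finsetCard]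
  refine Nat.card_congr (Equiv.subtypeEquivRight fun b => ?_)
  have hsum : l * ∑ i, b i < N ↔ ∑ i, b i ≤ (N - 1) / l := by
    rw [Nat.le_div_iff_mul_le hl, mul_comm]
    omega
  have hres : (b 0 + ∑ j : Fin m, a j * b j.succ) % r = 0 ↔
      ∑ i, (Fin.cons 1 fun j => (a j : ZMod r) : Fin (m + 1) → ZMod r) i * b i = 0 := by
    rw [← Nat.dvd_iff_mod_eq_zero, ← ZMod.natCast_eq_zero_iff, Fin.sum_univ_succ]
    simp
  simp only [simplexLevel, mem_filter, mem_simplexPoints, hsum, hres]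

theorem stmt2_general (m r : ℕ) (hr : 0 < r) (a : Fin m → ℕ) :
    ∀ l : ℕ, l = sInf {i : ℕ | 0 < i ∧ i ≤ r ∧ ∀ j : Fin m, a j * i ≡ i [MOD r]} →
    Tendsto (fun h : ℕ =>
      ((Nat.card {b : Fin (m + 1) → ℕ //
          l * (∑ i, b i) < h * r ∧ (b 0 + ∑ j : Fin m, a j * b j.succ) % r = 0} : ℝ)
        * (Nat.factorial (m + 1) : ℝ)) / (h : ℝ) ^ (m + 1))
      atTop (nhds ((r : ℝ) ^ m / (l : ℝ) ^ (m + 1))) := by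
  intro l hl
  have : NeZero r := ⟨hr.ne'⟩
  have hrmem : r ∈ {i : ℕ | 0 < i ∧ i ≤ r ∧ ∀ j : Fin m, a j * i ≡ i [MOD r]} :=
    ⟨hr, le_rfl, fun j => by simp [Nat.ModEq]⟩
  have hl0 : 0 < l := hl ▸ (Nat.sInf_mem ⟨r, hrmem⟩).1
  have hK (h : ℕ) : |(((h * r - 1) / l : ℕ) : ℝ) - r / l * h| ≤ 1 := by
    convert abs_pred_div_sub_div_le (N := h * r) hl0 using 3
    push_cast
    ring
  have hKr : ∀ᶠ h in atTop, r ≤ (h * r - 1) / l := by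
    filter_upwards [eventually_ge_atTop (l + 1)] with h hh
    rw [Nat.le_div_iff_mul_le hl0]
    have := Nat.mul_le_mul_right r hh
    rw [Nat.add_mul, Nat.one_mul, Nat.mul_comm l] at this
    omega
  have hlim := tendsto_card_simplexLevel_mul_factorial_div_pow
    (w := Fin.cons 1 fun j => (a j : ZMod r)) (i := 0) rfl hK hKr 0
  rw [Fintype.card_fin, div_pow, pow_succ', mul_div_assoc, mul_div_cancel_left₀ _
    (Nat.cast_pos.2 hr).ne'] at hlim
  refine hlim.congr' ?_
  filter_upwards [eventually_gt_atTop 0] with h hh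
  rw [natCard_eq_card_simplexLevel hl0 (by positivity)]

/-- Weighted multiplicity of ℂⁿ/ℤ_r(1,a₁,...,a_{n−1}) at the origin for the weighted
    blow up with all weights l/r, where n = m+1 ≥ 1:
    g(h)·n!/hⁿ → r^{n−1}/lⁿ. -/
theorem stmt2 (m r : ℕ) (hr : 0 < r) (a : Fin m → ℕ) (ha : ∀ j, a j < r)
    (hcop : ∀ hm : 0 < m, Nat.Coprime r (a ⟨0, hm⟩)) :
    ∀ l : ℕ, l = sInf {i : ℕ | 0 < i ∧ i ≤ r ∧ ∀ j : Fin m, a j * i ≡ i [MOD r]} →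
    Tendsto (fun h : ℕ =>
      ((Nat.card {b : Fin (m + 1) → ℕ //
          l * (∑ i, b i) < h * r ∧ (b 0 + ∑ j : Fin m, a j * b j.succ) % r = 0} : ℝ)
        * (Nat.factorial (m + 1) : ℝ)) / (h : ℝ) ^ (m + 1))
      atTop (nhds ((r : ℝ) ^ m / (l : ℝ) ^ (m + 1))) :=
  stmt2_general m r hr a
end

section
/- Let r be a positive integer and a, b integers with 0 ≤ a, b < r and gcd(r,a) = gcd(r,b) = 1. Let l = min{ i : 0 < i ≤ r and i ≡ a·i ≡ b·i (mod r) }. Define g(h) = |{(s,u) ∈ ℤ≥0² : l(s+u)/r < h and s + a·u ≡ 0 (mod r)}|. Then g(h)·2/h² tends to r/l² as h → ∞. -/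
/-!
For `N = ⌈h r / l⌉`, the condition `l (s + u) < h r` says `s + u < N`. Fixing `u`, the admissible `s`
are the elements of `[0, N - u)` in one residue class mod `r`, so there are `(N - u) / r + O(1)` of
them; summing over `u < N` gives `N² / (2r) + O(N)` points. Since `N / h → r / l`, this yields
`2 g(h) / h² → (r / l)² / r = r / l²`.
-/

open Filter Finset Topology

namespace Nat

lemma abs_count_modEq_sub_div_le {r : ℕ} (hr : 0 < r) (K v : ℕ) :
    |(K.count (· ≡ v [MOD r]) : ℝ) - K / r| ≤ 1 := by
  have hfloor : ((K / r : ℕ) : ℝ) ≤ K / r ∧ (K / r : ℝ) < (K / r : ℕ) + 1 := by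
    rw [← Nat.floor_div_eq_div (K := ℝ)]
    exact ⟨Nat.floor_le (by positivity), Nat.lt_floor_add_one _⟩
  rw [count_modEq_card _ hr, abs_le]
  split_ifs <;> push_cast <;> constructor <;> linarith

-- `(r - 1) * m` is a natural-number representative of `-m` modulo `r`.
lemma card_filter_range_add_mod_eq_zero {r : ℕ} (hr : 0 < r) (K m : ℕ) :
    #{s ∈ range K | (s + m) % r = 0} = K.count (· ≡ (r - 1) * m [MOD r]) := by
  have hzero : 0 ≡ (r - 1) * m + m [MOD r] := by
    rw [← Nat.succ_mul, Nat.sub_one, Nat.succ_pred_eq_of_pos hr]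
    exact (Nat.mul_mod_right r m).symm
  rw [count_eq_card_filter_range]
  congr 1
  ext s
  simp only [mem_filter]
  change _ ∧ (s + m) ≡ 0 [MOD r] ↔ _
  exact and_congr_right fun _ =>
    ⟨fun h => h.trans hzero |>.add_right_cancel' m, fun h => (h.add_right m).trans hzero.symm⟩

lemma sum_range_sub_mul_two (N : ℕ) : (∑ u ∈ range N, (N - u)) * 2 = N * (N + 1) := by
  induction N with
  | zero => simp
  | succ N ih =>
    rw [sum_range_succ', add_mul]
    simp only [Nat.add_sub_add_right, Nat.sub_zero]
    rw [ih]
    ring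

lemma lt_ceil_mul_div_iff {l : ℕ} (hl : 0 < l) (t h r : ℕ) :
    t < ⌈(h : ℝ) * (r / l)⌉₊ ↔ l * t < h * r := by
  rw [Nat.lt_ceil, ← mul_div_assoc, lt_div_iff₀ (by positivity), mul_comm]
  norm_cast

end Nat

def residueTriangle (r a N : ℕ) : Finset (ℕ × ℕ) :=
  {p ∈ range N ×ˢ range N | p.1 + p.2 < N ∧ (p.1 + a * p.2) % r = 0}

lemma mem_residueTriangle {r a N : ℕ} {p : ℕ × ℕ} :
    p ∈ residueTriangle r a N ↔ p.1 + p.2 < N ∧ (p.1 + a * p.2) % r = 0 := by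
  simp only [residueTriangle, mem_filter, mem_product, mem_range]
  omega

lemma card_residueTriangle (r a N : ℕ) :
    #(residueTriangle r a N) = ∑ u ∈ range N, #{s ∈ range (N - u) | (s + a * u) % r = 0} := by
  rw [residueTriangle, card_filter, sum_product_right]
  refine sum_congr rfl fun u _ => ?_
  rw [← card_filter]
  congr 1
  ext s
  simp only [mem_filter, mem_range]
  omega

lemma abs_card_residueTriangle_sub_le {r : ℕ} (hr : 0 < r) (a N : ℕ) :
    |(#(residueTriangle r a N) : ℝ) - N * (N + 1) / (2 * r)| ≤ N := by
  have hgauss : (N * (N + 1) / (2 * r) : ℝ) = ∑ u ∈ range N, ((N - u : ℕ) : ℝ) / r := by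
    have h : ((∑ u ∈ range N, (N - u) : ℕ) : ℝ) * 2 = N * (N + 1) := by
      exact_mod_cast Nat.sum_range_sub_mul_two N
    rw [← sum_div, ← Nat.cast_sum, ← h]
    field_simp
  calc |(#(residueTriangle r a N) : ℝ) - N * (N + 1) / (2 * r)|
      = |∑ u ∈ range N,
          ((#{s ∈ range (N - u) | (s + a * u) % r = 0} : ℝ) - ((N - u : ℕ) : ℝ) / r)| := by
        rw [card_residueTriangle, hgauss, Nat.cast_sum, sum_sub_distrib]
    _ ≤ ∑ u ∈ range N,
          |(#{s ∈ range (N - u) | (s + a * u) % r = 0} : ℝ) - ((N - u : ℕ) : ℝ) / r| :=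
        abs_sum_le_sum_abs _ _
    _ ≤ ∑ _u ∈ range N, (1 : ℝ) := sum_le_sum fun u _ => by
        rw [Nat.card_filter_range_add_mod_eq_zero hr]
        exact Nat.abs_count_modEq_sub_div_le hr _ _
    _ = N := by simp

lemma tendsto_card_residueTriangle_div_sq {r : ℕ} (hr : 0 < r) (a : ℕ) {N : ℕ → ℕ} {c : ℝ}
    (hN : Tendsto (fun h : ℕ => (N h : ℝ) / h) atTop (𝓝 c)) :
    Tendsto (fun h : ℕ => (#(residueTriangle r a (N h)) : ℝ) * 2 / h ^ 2) atTop
      (𝓝 (c ^ 2 / r)) := by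
  have hr' : (1 : ℝ) ≤ r := by exact_mod_cast hr
  have hsmall : Tendsto (fun h : ℕ => 3 * ((N h : ℝ) / h * (1 / h))) atTop (𝓝 0) := by
    simpa using (hN.mul tendsto_one_div_atTop_nhds_zero_nat).const_mul 3
  have herr : Tendsto (fun h : ℕ =>
      (#(residueTriangle r a (N h)) : ℝ) * 2 / h ^ 2 - ((N h : ℝ) / h) ^ 2 / r) atTop (𝓝 0) := by
    refine squeeze_zero_norm' ?_ hsmall
    filter_upwards [eventually_gt_atTop 0] with h hh
    have hC := abs_le.mp (abs_card_residueTriangle_sub_le hr a (N h))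
    set C : ℝ := ((#(residueTriangle r a (N h)) : ℕ) : ℝ)
    set n : ℝ := (N h : ℝ)
    have hh' : (0 : ℝ) < h := by exact_mod_cast hh
    have hnr : n / r ≤ n := div_le_self (Nat.cast_nonneg _) hr'
    have hnr0 : 0 ≤ n / r := by positivity
    have hsplit : 2 * (n * (n + 1) / (2 * r)) = n ^ 2 / r + n / r := by
      field_simp
    have hbound : |2 * C - n ^ 2 / r| ≤ 3 * n := abs_le.mpr ⟨by linarith, by linarith⟩
    calc ‖C * 2 / h ^ 2 - (n / h) ^ 2 / r‖ = |2 * C - n ^ 2 / r| / h ^ 2 := by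
          have hrewrite : C * 2 / h ^ 2 - (n / h) ^ 2 / r = (2 * C - n ^ 2 / r) / h ^ 2 := by
            field_simp
          rw [Real.norm_eq_abs, hrewrite, abs_div, abs_of_pos (pow_pos hh' 2)]
      _ ≤ 3 * n / h ^ 2 := by gcongr
      _ = 3 * (n / h * (1 / h)) := by ring
  simpa using herr.add ((hN.pow 2).div_const (r : ℝ))

lemma tendsto_natCeil_mul_div_atTop {c : ℝ} (hc : 0 < c) :
    Tendsto (fun h : ℕ => (⌈h * c⌉₊ : ℝ) / h) atTop (𝓝 c) := by
  have hlin : Tendsto (fun h : ℕ => (h : ℝ) * c) atTop atTop :=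
    tendsto_natCast_atTop_atTop.atTop_mul_const hc
  have := (tendsto_nat_ceil_div_atTop.comp hlin).mul_const c
  rw [one_mul] at this
  refine this.congr' ?_
  filter_upwards [eventually_gt_atTop 0] with h hh
  have hh' : (h : ℝ) ≠ 0 := by positivity
  simp only [Function.comp_apply]
  field_simp

theorem stmt3_general (r a b : ℕ) (hr : 0 < r) :
    ∀ l : ℕ, l = sInf {i : ℕ | 0 < i ∧ i ≤ r ∧ a * i ≡ i [MOD r] ∧ b * i ≡ i [MOD r]} →
    Tendsto (fun h : ℕ =>
      ((Nat.card {p : ℕ × ℕ // l * (p.1 + p.2) < h * r ∧ (p.1 + a * p.2) % r = 0} : ℝ) * 2)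
        / (h : ℝ) ^ 2)
      atTop (nhds ((r : ℝ) / (l : ℝ) ^ 2)) := by
  intro l hl
  have hr_mem : r ∈ {i : ℕ | 0 < i ∧ i ≤ r ∧ a * i ≡ i [MOD r] ∧ b * i ≡ i [MOD r]} :=
    ⟨hr, le_rfl, by simp [Nat.ModEq], by simp [Nat.ModEq]⟩
  have hl0 : 0 < l := hl ▸ (Nat.sInf_mem ⟨r, hr_mem⟩).1
  have hcount (h : ℕ) :
      Nat.card {p : ℕ × ℕ // l * (p.1 + p.2) < h * r ∧ (p.1 + a * p.2) % r = 0} =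
        #(residueTriangle r a ⌈(h : ℝ) * (r / l)⌉₊) := by
    rw [← Nat.card_eq_finsetCard]
    exact Nat.card_congr <| Equiv.subtypeEquivRight fun p => by
      rw [mem_residueTriangle, Nat.lt_ceil_mul_div_iff hl0]
  simp_rw [hcount]
  convert tendsto_card_residueTriangle_div_sq hr a
    (tendsto_natCeil_mul_div_atTop (c := r / l) (by positivity)) using 2
  field_simp

/-- Weighted multiplicity of S₁ = ℂ²/ℤ_r(1,a) at the origin for the weighted blow up
    of ℂ³/ℤ_r(1,a,b) with weights (l/r,l/r,l/r): g(h)·2/h² → r/l². -/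
theorem stmt3 (r a b : ℕ) (hr : 0 < r) (ha : a < r) (hb : b < r)
    (hca : Nat.Coprime r a) (hcb : Nat.Coprime r b) :
    ∀ l : ℕ, l = sInf {i : ℕ | 0 < i ∧ i ≤ r ∧ a * i ≡ i [MOD r] ∧ b * i ≡ i [MOD r]} →
    Tendsto (fun h : ℕ =>
      ((Nat.card {p : ℕ × ℕ // l * (p.1 + p.2) < h * r ∧ (p.1 + a * p.2) % r = 0} : ℝ) * 2)
        / (h : ℝ) ^ 2)
      atTop (nhds ((r : ℝ) / (l : ℝ) ^ 2)) :=
  stmt3_general r a b hr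
end
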